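/- Let α ∈ (0,1], let λ = max_t λ₂(W^t) be the maximum over t of the second-largest eigenvalue modulus of the mixing matrices, and let t₀(α) be the smallest positive integer such that λ ≤ (t₀(α)/(t₀(α)+1))^α · 1/(1 + (t₀(α))^{−α}). Then the decentralized Frank–Wolfe method with step size γ_t = 1/t^α satisfies, for all t ≥ 1, max_{i∈V} ‖x̄_t^i − x̄_t‖₂ ≤ C_p/t^α, and moreover √(Σ_{i=1}^N ‖x̄_t^i − x̄_t‖₂²) ≤ C_p/t^α, where C_p = (t₀(α))^α · √N · ρ̄. -/

import Mathlib

open Finset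
open scoped RealInnerProductSpace BigOperators

/-!
Let `e t` be the `ℓ²` deviation of the mixed iterates `x̄ₜⁱ` from their mean. Mixing preserves
the mean and contracts the deviation by `λ`, and a Frank–Wolfe step is a convex combination with
points of `D`, whose deviation is at most `√N ρ̄`; hence
`e (t+1) ≤ λ ((1 - γₜ) e t + γₜ √N ρ̄)`. For `t ≤ t₀` the crude bound `e t ≤ √N ρ̄` already gives
`C_p / t^α`, and the defining inequality of `t₀` makes `C_p / t^α` a supersolution of the
recurrence from `t₀` on.
-/

open Real

section L2

variable {ι E : Type*} [Fintype ι] [SeminormedAddCommGroup E]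

lemma sqrt_sum_norm_sq_eq_norm_toLp (f : ι → E) :
    √(∑ i, ‖f i‖ ^ 2) = ‖WithLp.toLp 2 f‖ :=
  (PiLp.norm_eq_of_L2 _).symm

lemma norm_le_sqrt_sum_norm_sq (f : ι → E) (i : ι) : ‖f i‖ ≤ √(∑ j, ‖f j‖ ^ 2) := by
  rw [sqrt_sum_norm_sq_eq_norm_toLp]
  exact PiLp.norm_apply_le (WithLp.toLp 2 f) i

lemma sqrt_sum_norm_sq_le {f : ι → E} {ρ : ℝ} (hρ : 0 ≤ ρ) (hf : ∀ i, ‖f i‖ ≤ ρ) :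
    √(∑ i, ‖f i‖ ^ 2) ≤ √(Fintype.card ι) * ρ := by
  calc √(∑ i, ‖f i‖ ^ 2) ≤ √(∑ _i : ι, ρ ^ 2) :=
        sqrt_le_sqrt <| sum_le_sum fun i _ => pow_le_pow_left₀ (norm_nonneg _) (hf i) 2
    _ = √(Fintype.card ι) * ρ := by
        rw [sum_const, card_univ, nsmul_eq_mul, sqrt_mul (Nat.cast_nonneg _), sqrt_sq hρ]

end L2

namespace Consensus

variable {E : Type*} [NormedAddCommGroup E] [NormedSpace ℝ E] {N : ℕ}

noncomputable def mean (y : Fin N → E) : E := (N : ℝ)⁻¹ • ∑ j, y j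

noncomputable def deviation (y : Fin N → E) : ℝ := √(∑ i, ‖y i - mean y‖ ^ 2)

lemma deviation_nonneg (y : Fin N → E) : 0 ≤ deviation y := sqrt_nonneg _

lemma mean_mem {D : Set E} (hD : Convex ℝ D) (hN : 0 < N) {y : Fin N → E}
    (hy : ∀ i, y i ∈ D) : mean y ∈ D := by
  have h := hD.centerMass_mem (t := univ) (w := fun _ => (1 : ℝ)) (z := y)
    (fun _ _ => zero_le_one) (by simpa using hN) (fun i _ => hy i)
  simpa [centerMass, mean] using h

lemma deviation_le_of_diam {D : Set E} (hD : Convex ℝ D) (hN : 0 < N) {ρ : ℝ}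
    (hdiam : ∀ a ∈ D, ∀ b ∈ D, ‖a - b‖ ≤ ρ) {y : Fin N → E} (hy : ∀ i, y i ∈ D) :
    deviation y ≤ √N * ρ := by
  have hclose i : ‖y i - mean y‖ ≤ ρ := hdiam _ (hy i) _ (mean_mem hD hN hy)
  have hρ : 0 ≤ ρ := (norm_nonneg _).trans (hclose ⟨0, hN⟩)
  unfold deviation
  simpa only [Fintype.card_fin] using sqrt_sum_norm_sq_le hρ hclose

lemma mean_mix {W : Matrix (Fin N) (Fin N) ℝ} (hW : ∀ j, ∑ i, W i j = 1) (y : Fin N → E) :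
    mean (fun i => ∑ j, W i j • y j) = mean y := by
  simp only [mean]
  rw [sum_comm]
  simp only [← sum_smul, hW, one_smul]

lemma mean_lineMap (a b : Fin N → E) (γ : ℝ) :
    mean (fun i => a i + γ • (b i - a i)) = mean a + γ • (mean b - mean a) := by
  simp only [mean, sum_add_distrib, ← smul_sum, sum_sub_distrib]
  module

lemma deviation_lineMap_le (a b : Fin N → E) {γ : ℝ} (hγ0 : 0 ≤ γ) (hγ1 : γ ≤ 1) :
    deviation (fun i => a i + γ • (b i - a i))
      ≤ (1 - γ) * deviation a + γ * deviation b := by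
  have hsplit :
      WithLp.toLp 2 (fun i => a i + γ • (b i - a i) - mean (fun i => a i + γ • (b i - a i)))
        = (1 - γ) • WithLp.toLp 2 (fun i => a i - mean a)
          + γ • WithLp.toLp 2 (fun i => b i - mean b) := by
    ext i
    simp only [mean_lineMap, PiLp.add_apply, PiLp.smul_apply]
    module
  simp only [deviation, sqrt_sum_norm_sq_eq_norm_toLp, hsplit]
  refine (norm_add_le _ _).trans_eq ?_
  rw [norm_smul, norm_smul, Real.norm_of_nonneg (by linarith), Real.norm_of_nonneg hγ0]

noncomputable def contractionThreshold (α s : ℝ) : ℝ := (s / (s + 1)) ^ α * (1 + s ^ (-α))⁻¹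

lemma contractionThreshold_le_one {α s : ℝ} (hα : 0 ≤ α) (hs : 0 ≤ s) :
    contractionThreshold α s ≤ 1 := by
  have hratio : (s / (s + 1)) ^ α ≤ 1 :=
    rpow_le_one (by positivity) ((div_le_one (by positivity)).2 (by linarith)) hα
  have hinv : (1 + s ^ (-α))⁻¹ ≤ 1 := inv_le_one_of_one_le₀ (by linarith [rpow_nonneg hs (-α)])
  exact (mul_le_mul hratio hinv (by positivity) zero_le_one).trans_eq (one_mul 1)

lemma div_add_one_rpow_le_div_add_one_rpow {α a b : ℝ} (hα : 0 ≤ α) (ha : 0 ≤ a)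
    (hab : a ≤ b) :
    (a / (a + 1)) ^ α ≤ (b / (b + 1)) ^ α := by
  refine rpow_le_rpow (by positivity) ?_ hα
  rw [div_le_div_iff₀ (by positivity) (by linarith)]
  linarith

lemma le_rpow_div_of_recurrence {α B lam : ℝ} {t0 : ℕ} {e : ℕ → ℝ}
    (hα : 0 ≤ α) (ht0 : 0 < t0) (hB : 0 ≤ B) (hlam0 : 0 ≤ lam)
    (hlam : lam ≤ contractionThreshold α t0) (hbound : ∀ t, e t ≤ B)
    (hrec : ∀ t : ℕ, 1 ≤ t →
      e (t + 1) ≤ lam * ((1 - ((t : ℝ) ^ α)⁻¹) * e t + ((t : ℝ) ^ α)⁻¹ * B)) :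
    ∀ t : ℕ, 1 ≤ t → e t ≤ (t0 : ℝ) ^ α * B / (t : ℝ) ^ α := by
  have ht0R : (0 : ℝ) < t0 := by exact_mod_cast ht0
  have hearly (t : ℕ) (ht : 1 ≤ t) (htt0 : t ≤ t0) :
      e t ≤ (t0 : ℝ) ^ α * B / (t : ℝ) ^ α := by
    have htR : (0 : ℝ) < t := by exact_mod_cast ht
    rw [le_div_iff₀ (rpow_pos_of_pos htR α)]
    calc e t * (t : ℝ) ^ α ≤ B * (t0 : ℝ) ^ α :=
          mul_le_mul (hbound t) (rpow_le_rpow htR.le (by exact_mod_cast htt0) hα)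
            (by positivity) hB
      _ = (t0 : ℝ) ^ α * B := mul_comm _ _
  intro t ht
  induction t, ht using Nat.le_induction with
  | base => exact hearly 1 le_rfl ht0
  | succ s hs ih =>
    by_cases hst0 : s + 1 ≤ t0
    · exact hearly (s + 1) (by omega) hst0
    have hsR : (1 : ℝ) ≤ s := by exact_mod_cast hs
    set A := (s : ℝ) ^ α with hA
    set C := (t0 : ℝ) ^ α * B with hC
    have hA1 : 1 ≤ A := one_le_rpow hsR hα
    have hC0 : 0 ≤ C := by positivity
    -- `t0` is chosen so that `lam` absorbs the growth factor `1 + t0^(-α)` for every `s ≥ t0`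
    have hgain : lam * (1 + (t0 : ℝ) ^ (-α)) ≤ A / ((s : ℝ) + 1) ^ α := by
      rw [hA, ← div_rpow (by linarith) (by linarith)]
      calc lam * (1 + (t0 : ℝ) ^ (-α)) ≤ ((t0 : ℝ) / (t0 + 1)) ^ α := by
            rwa [← le_div_iff₀ (by positivity)]
        _ ≤ ((s : ℝ) / (s + 1)) ^ α :=
            div_add_one_rpow_le_div_add_one_rpow hα ht0R.le (by exact_mod_cast (by omega))
    have hB_eq : B = C * (t0 : ℝ) ^ (-α) := by
      rw [hC, rpow_neg ht0R.le]
      field_simp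
    calc e (s + 1) ≤ lam * ((1 - A⁻¹) * e s + A⁻¹ * B) := hrec s hs
      _ ≤ lam * ((1 - A⁻¹) * (C / A) + A⁻¹ * B) := by
          gcongr
          linarith [inv_le_one_of_one_le₀ hA1]
      _ = lam * ((1 + (t0 : ℝ) ^ (-α)) * (C / A) - A⁻¹ * (C / A)) := by
          rw [hB_eq]
          ring
      _ ≤ lam * (1 + (t0 : ℝ) ^ (-α)) * (C / A) := by
          rw [mul_assoc]
          gcongr
          exact sub_le_self _ (by positivity)
      _ ≤ A / ((s : ℝ) + 1) ^ α * (C / A) := by gcongr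
      _ = C / ((s + 1 : ℕ) : ℝ) ^ α := by
          push_cast
          field_simp

end Consensus

open Consensus

theorem stmt_1_general
    {n N : ℕ} (hN : 0 < N)
    (D : Set (EuclideanSpace ℝ (Fin n)))
    (hDconv : Convex ℝ D)
    (ρ : ℝ) (hdiam : ∀ a ∈ D, ∀ b ∈ D, ‖a - b‖ ≤ ρ)
    (α : ℝ) (hα : α ∈ Set.Ioc (0 : ℝ) 1)
    -- symmetric doubly stochastic mixing matrices
    (W : ℕ → Matrix (Fin N) (Fin N) ℝ)
    (hWcol : ∀ t j, ∑ i, W t i j = 1)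
    -- `lam = max_t λ₂(Wᵗ)`: the consensus step contracts the deviation from
    -- the mean by the factor `lam`, uniformly in `t`
    (lam : ℝ) (hlam0 : 0 ≤ lam)
    (hWcontr : ∀ t (y : Fin N → EuclideanSpace ℝ (Fin n)),
      Real.sqrt (∑ i, ‖(∑ j, W t i j • y j) - (N : ℝ)⁻¹ • ∑ j, y j‖ ^ 2)
        ≤ lam * Real.sqrt (∑ i, ‖y i - (N : ℝ)⁻¹ • ∑ j, y j‖ ^ 2))
    -- `t₀ = t₀(α)` is the smallest positive integer satisfying the condition
    (t0 : ℕ) (ht0pos : 0 < t0)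
    (ht0 : lam ≤ ((t0 : ℝ) / ((t0 : ℝ) + 1)) ^ α * (1 + (t0 : ℝ) ^ (-α))⁻¹)
    -- the iterates of the decentralized Frank–Wolfe method
    (x xb v : ℕ → Fin N → EuclideanSpace ℝ (Fin n))
    (hxD : ∀ t i, x t i ∈ D)
    (hxb : ∀ t i, xb t i = ∑ j, W t i j • x t j)
    (hvD : ∀ t i, v t i ∈ D)
    -- Frank–Wolfe update with step size γ_t = 1/t^α
    (hstep : ∀ t : ℕ, 1 ≤ t → ∀ i,
      x (t + 1) i = xb t i + (((t : ℝ) ^ α)⁻¹) • (v t i - xb t i)) :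
    ∀ t : ℕ, 1 ≤ t →
      (∀ i, ‖xb t i - (N : ℝ)⁻¹ • ∑ j, x t j‖
          ≤ (t0 : ℝ) ^ α * Real.sqrt N * ρ / (t : ℝ) ^ α) ∧
      Real.sqrt (∑ i, ‖xb t i - (N : ℝ)⁻¹ • ∑ j, x t j‖ ^ 2)
          ≤ (t0 : ℝ) ^ α * Real.sqrt N * ρ / (t : ℝ) ^ α := by
  have hα0 : 0 ≤ α := hα.1.le
  have hmean (t : ℕ) : mean (xb t) = mean (x t) := by
    simpa only [← hxb] using mean_mix (hWcol t) (x t)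
  have hconsensus (t : ℕ) : deviation (xb t) ≤ lam * deviation (x t) := by
    have h := hWcontr t (x t)
    simp only [← hxb] at h
    rwa [deviation, hmean]
  have hdev {y : Fin N → EuclideanSpace ℝ (Fin n)} (hy : ∀ i, y i ∈ D) :
      deviation y ≤ √N * ρ :=
    deviation_le_of_diam hDconv hN hdiam hy
  have hB : 0 ≤ √N * ρ := (deviation_nonneg _).trans (hdev (hxD 0))
  have hlam1 : lam ≤ 1 := ht0.trans (contractionThreshold_le_one hα0 (Nat.cast_nonneg t0))
  have hbound (t : ℕ) : deviation (xb t) ≤ √N * ρ :=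
    calc deviation (xb t) ≤ lam * deviation (x t) := hconsensus t
      _ ≤ deviation (x t) := mul_le_of_le_one_left (deviation_nonneg _) hlam1
      _ ≤ √N * ρ := hdev (hxD t)
  have hrec (t : ℕ) (ht : 1 ≤ t) : deviation (xb (t + 1))
      ≤ lam * ((1 - ((t : ℝ) ^ α)⁻¹) * deviation (xb t) + ((t : ℝ) ^ α)⁻¹ * (√N * ρ)) := by
    set γ := ((t : ℝ) ^ α)⁻¹
    have hγ1 : γ ≤ 1 := inv_le_one_of_one_le₀ (one_le_rpow (by exact_mod_cast ht) hα0)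
    calc deviation (xb (t + 1)) ≤ lam * deviation (x (t + 1)) := hconsensus _
      _ ≤ lam * ((1 - γ) * deviation (xb t) + γ * deviation (v t)) := by
          rw [funext (hstep t ht)]
          gcongr
          exact deviation_lineMap_le _ _ (by positivity) hγ1
      _ ≤ lam * ((1 - γ) * deviation (xb t) + γ * (√N * ρ)) := by
          gcongr
          exact hdev (hvD t)
  intro t ht
  have hkey := le_rpow_div_of_recurrence hα0 ht0pos hB hlam0 ht0 hbound hrec t ht
  rw [← mul_assoc, deviation, hmean] at hkey
  exact ⟨fun i => (norm_le_sqrt_sum_norm_sq _ i).trans hkey, hkey⟩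

/-- Lemma on the consensus deviation: with step size
`γ_t = 1/t^α`, `λ = max_t λ₂(Wᵗ)` (expressed through the contraction of the
consensus step that it provides), and `t₀(α)` the smallest positive integer
with `λ ≤ (t₀/(t₀+1))^α / (1 + t₀^{−α})`, the decentralized Frank–Wolfe
iterates satisfy `max_i ‖x̄ᵗᵢ − x̄ₜ‖ ≤ C_p/t^α` and
`√(∑ᵢ ‖x̄ᵗᵢ − x̄ₜ‖²) ≤ C_p/t^α` with `C_p = t₀(α)^α √N ρ̄`. -/
theorem stmt_1
    {n N : ℕ} (hN : 0 < N)
    (D : Set (EuclideanSpace ℝ (Fin n)))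
    (hDconv : Convex ℝ D) (hDcomp : IsCompact D) (hDne : D.Nonempty)
    (ρ : ℝ) (hdiam : ∀ a ∈ D, ∀ b ∈ D, ‖a - b‖ ≤ ρ)
    (α : ℝ) (hα : α ∈ Set.Ioc (0 : ℝ) 1)
    -- symmetric doubly stochastic mixing matrices
    (W : ℕ → Matrix (Fin N) (Fin N) ℝ)
    (hWsymm : ∀ t, (W t).IsSymm)
    (hWnonneg : ∀ t i j, 0 ≤ W t i j)
    (hWrow : ∀ t i, ∑ j, W t i j = 1)
    (hWcol : ∀ t j, ∑ i, W t i j = 1)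
    -- `lam = max_t λ₂(Wᵗ)`: the consensus step contracts the deviation from
    -- the mean by the factor `lam`, uniformly in `t`
    (lam : ℝ) (hlam0 : 0 ≤ lam)
    (hWcontr : ∀ t (y : Fin N → EuclideanSpace ℝ (Fin n)),
      Real.sqrt (∑ i, ‖(∑ j, W t i j • y j) - (N : ℝ)⁻¹ • ∑ j, y j‖ ^ 2)
        ≤ lam * Real.sqrt (∑ i, ‖y i - (N : ℝ)⁻¹ • ∑ j, y j‖ ^ 2))
    -- `t₀ = t₀(α)` is the smallest positive integer satisfying the condition
    (t0 : ℕ) (ht0pos : 0 < t0)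
    (ht0 : lam ≤ ((t0 : ℝ) / ((t0 : ℝ) + 1)) ^ α * (1 + (t0 : ℝ) ^ (-α))⁻¹)
    (ht0min : ∀ s : ℕ, 0 < s →
      lam ≤ ((s : ℝ) / ((s : ℝ) + 1)) ^ α * (1 + (s : ℝ) ^ (-α))⁻¹ → t0 ≤ s)
    -- the iterates of the decentralized Frank–Wolfe method
    (x xb v : ℕ → Fin N → EuclideanSpace ℝ (Fin n))
    (hxD : ∀ t i, x t i ∈ D)
    (hxb : ∀ t i, xb t i = ∑ j, W t i j • x t j)
    (hvD : ∀ t i, v t i ∈ D)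
    -- Frank–Wolfe update with step size γ_t = 1/t^α
    (hstep : ∀ t : ℕ, 1 ≤ t → ∀ i,
      x (t + 1) i = xb t i + (((t : ℝ) ^ α)⁻¹) • (v t i - xb t i)) :
    ∀ t : ℕ, 1 ≤ t →
      (∀ i, ‖xb t i - (N : ℝ)⁻¹ • ∑ j, x t j‖
          ≤ (t0 : ℝ) ^ α * Real.sqrt N * ρ / (t : ℝ) ^ α) ∧
      Real.sqrt (∑ i, ‖xb t i - (N : ℝ)⁻¹ • ∑ j, x t j‖ ^ 2)
          ≤ (t0 : ℝ) ^ α * Real.sqrt N * ρ / (t : ℝ) ^ α :=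
  stmt_1_general hN D hDconv ρ hdiam α hα W hWcol lam hlam0 hWcontr t0 ht0pos ht0 x xb v hxD hxb hvD
    hstep
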